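/- arXiv:q-bio/0611029 — 2 statements merged into one kernel-verified Lean document; each statement's English description precedes it below -/
import Mathlib

section
/- Let Ψ be a nonnegative real random variable with finite second moment and let k ∈ ℕ. Then |E[e^{-Ψ} Ψ^k / k!] − e^{-E[Ψ]} (E[Ψ])^k / k!| ≤ 2 · Var[Ψ]. -/
/-!
The Poisson weight `w_k(x) = e^{-x} x^k / k!` satisfies `w_k' = w_{k-1} - w_k` (with `w_{-1} = 0`),
and every `w_j` takes values in `[0, 1]` on `[0, ∞)`. Hence each `w_j` is `1`-Lipschitz there and
`w_k'` is `2`-Lipschitz, so the first-order Taylor remainder of `w_k` at `m = E[Ψ]` is at most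
`2 (x - m)²`. Taking expectations, the linear term vanishes and the remainder integrates to at most
`2 Var[Ψ]`.
-/

open MeasureTheory ProbabilityTheory NNReal

theorem abs_sub_sub_mul_sub_le_of_lipschitzOnWith_deriv {f f' : ℝ → ℝ} {s : Set ℝ} {K : ℝ≥0}
    (hs : Convex ℝ s) (hf : ∀ x ∈ s, HasDerivWithinAt f (f' x) s x)
    (hf' : LipschitzOnWith K f' s) {x m : ℝ} (hx : x ∈ s) (hm : m ∈ s) :
    |f x - f m - f' m * (x - m)| ≤ K * (x - m) ^ 2 := by
  have hsub : Set.uIcc m x ⊆ s := hs.ordConnected.uIcc_subset hm hx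
  have hderiv : ∀ t ∈ Set.uIcc m x,
      HasDerivWithinAt (fun t => f t - f' m * t) (f' t - f' m) (Set.uIcc m x) t := fun t ht =>
    (((hf t (hsub ht)).mono hsub).sub ((hasDerivWithinAt_id t _).const_mul (f' m))).congr_deriv
      (by simp)
  have hbound : ∀ t ∈ Set.uIcc m x, ‖f' t - f' m‖ ≤ K * |x - m| := fun t ht =>
    calc ‖f' t - f' m‖ ≤ K * |t - m| := hf'.dist_le_mul t (hsub ht) m hm
      _ ≤ K * |x - m| := mul_le_mul_of_nonneg_left (Set.abs_sub_left_of_mem_uIcc ht) K.coe_nonneg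
  have := (convex_uIcc m x).norm_image_sub_le_of_norm_hasDerivWithin_le hderiv hbound
    Set.left_mem_uIcc Set.right_mem_uIcc
  calc |f x - f m - f' m * (x - m)| = ‖(f x - f' m * x) - (f m - f' m * m)‖ := by
        rw [Real.norm_eq_abs]; ring_nf
    _ ≤ K * |x - m| * ‖x - m‖ := this
    _ = K * (x - m) ^ 2 := by rw [Real.norm_eq_abs, mul_assoc, abs_mul_abs_self, sq]

theorem abs_integral_comp_sub_comp_integral_le_mul_variance {Ω : Type*} [MeasurableSpace Ω]
    {μ : Measure Ω} [IsProbabilityMeasure μ] {X : Ω → ℝ} (hX : MemLp X 2 μ) {f : ℝ → ℝ}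
    (hfX : Integrable (fun ω => f (X ω)) μ) {a C : ℝ}
    (hf : ∀ᵐ ω ∂μ, |f (X ω) - f μ[X] - a * (X ω - μ[X])| ≤ C * (X ω - μ[X]) ^ 2) :
    |μ[fun ω => f (X ω)] - f μ[X]| ≤ C * variance X μ := by
  have hXint : Integrable X μ := hX.integrable one_le_two
  have hcentred : Integrable (fun ω => f (X ω) - f μ[X]) μ := hfX.sub (integrable_const _)
  have hlin : Integrable (fun ω => a * (X ω - μ[X])) μ :=
    (hXint.sub (integrable_const _)).const_mul a
  have hsq : Integrable (fun ω => (X ω - μ[X]) ^ 2) μ :=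
    (hX.sub (memLp_const μ[X])).integrable_sq
  have hremainder : μ[fun ω => f (X ω)] - f μ[X]
      = ∫ ω, (f (X ω) - f μ[X] - a * (X ω - μ[X])) ∂μ := by
    rw [integral_sub hcentred hlin, integral_sub hfX (integrable_const _),
      integral_const_mul, integral_sub hXint (integrable_const _)]
    simp
  rw [hremainder, variance_eq_integral hX.aemeasurable, ← integral_const_mul]
  calc |∫ ω, (f (X ω) - f μ[X] - a * (X ω - μ[X])) ∂μ|
      ≤ ∫ ω, |f (X ω) - f μ[X] - a * (X ω - μ[X])| ∂μ := abs_integral_le_integral_abs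
    _ ≤ ∫ ω, C * (X ω - μ[X]) ^ 2 ∂μ :=
      integral_mono_ae (hcentred.sub hlin).abs (hsq.const_mul C) hf

noncomputable def poissonWeight (k : ℕ) (x : ℝ) : ℝ :=
  Real.exp (-x) * x ^ k / (Nat.factorial k : ℝ)

noncomputable def poissonWeightDeriv : ℕ → ℝ → ℝ
  | 0, x => -poissonWeight 0 x
  | k + 1, x => poissonWeight k x - poissonWeight (k + 1) x

theorem poissonWeight_nonneg (k : ℕ) {x : ℝ} (hx : 0 ≤ x) : 0 ≤ poissonWeight k x := by
  unfold poissonWeight; positivity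

theorem poissonWeight_le_one (k : ℕ) {x : ℝ} (hx : 0 ≤ x) : poissonWeight k x ≤ 1 := by
  have h := mul_le_mul_of_nonneg_left (Real.pow_div_factorial_le_exp x hx k) (Real.exp_pos (-x)).le
  rwa [← Real.exp_add, neg_add_cancel, Real.exp_zero, ← mul_div_assoc] at h

theorem continuous_poissonWeight (k : ℕ) : Continuous (poissonWeight k) := by
  unfold poissonWeight; fun_prop

theorem hasDerivAt_poissonWeight (k : ℕ) (x : ℝ) :
    HasDerivAt (poissonWeight k) (poissonWeightDeriv k x) x := by
  have h := (((Real.hasDerivAt_exp (-x)).comp x (hasDerivAt_neg x)).mul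
    (hasDerivAt_pow k x)).div_const (Nat.factorial k : ℝ)
  refine h.congr_deriv ?_
  cases k with
  | zero => simp [poissonWeightDeriv, poissonWeight]
  | succ k =>
    simp only [poissonWeightDeriv, poissonWeight, Nat.factorial_succ, Nat.add_sub_cancel,
      Function.comp_apply]
    push_cast
    field_simp
    ring

theorem abs_poissonWeightDeriv_le_one (k : ℕ) {x : ℝ} (hx : 0 ≤ x) :
    |poissonWeightDeriv k x| ≤ 1 := by
  cases k with
  | zero =>
    rw [poissonWeightDeriv, abs_neg, abs_of_nonneg (poissonWeight_nonneg 0 hx)]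
    exact poissonWeight_le_one 0 hx
  | succ k =>
    exact abs_sub_le_of_nonneg_of_le (poissonWeight_nonneg k hx) (poissonWeight_le_one k hx)
      (poissonWeight_nonneg (k + 1) hx) (poissonWeight_le_one (k + 1) hx)

theorem lipschitzOnWith_poissonWeight (k : ℕ) :
    LipschitzOnWith 1 (poissonWeight k) (Set.Ici 0) :=
  (convex_Ici 0).lipschitzOnWith_of_nnnorm_hasDerivWithin_le
    (fun x _ => (hasDerivAt_poissonWeight k x).hasDerivWithinAt)
    (fun x hx => by
      rw [← NNReal.coe_le_coe, coe_nnnorm, Real.norm_eq_abs, NNReal.coe_one]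
      exact abs_poissonWeightDeriv_le_one k hx)

theorem lipschitzOnWith_poissonWeightDeriv (k : ℕ) :
    LipschitzOnWith 2 (poissonWeightDeriv k) (Set.Ici 0) := by
  cases k with
  | zero =>
    exact (lipschitzOnWith_poissonWeight 0).neg.weaken one_le_two
  | succ k =>
    have h := (lipschitzOnWith_poissonWeight k).sub (lipschitzOnWith_poissonWeight (k + 1))
    rwa [one_add_one_eq_two] at h

theorem abs_expectation_poissonWeight_sub_le_general {Ω : Type*} [MeasurableSpace Ω]
    (μ : Measure Ω) [IsProbabilityMeasure μ] (Ψ : Ω → ℝ)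
    (hnn : ∀ ω, 0 ≤ Ψ ω) (h2 : MemLp Ψ 2 μ) (k : ℕ) :
    |(∫ ω, Real.exp (-Ψ ω) * Ψ ω ^ k / (Nat.factorial k : ℝ) ∂μ)
        - Real.exp (-(∫ ω, Ψ ω ∂μ)) * (∫ ω, Ψ ω ∂μ) ^ k / (Nat.factorial k : ℝ)|
      ≤ 2 * variance Ψ μ := by
  have hmean : 0 ≤ μ[Ψ] := integral_nonneg hnn
  have hint : Integrable (fun ω => poissonWeight k (Ψ ω)) μ :=
    Integrable.of_bound ((continuous_poissonWeight k).comp_aestronglyMeasurable h2.1) 1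
      (ae_of_all _ fun ω => by
        rw [Real.norm_eq_abs, abs_of_nonneg (poissonWeight_nonneg k (hnn ω))]
        exact poissonWeight_le_one k (hnn ω))
  have htaylor := fun ω => abs_sub_sub_mul_sub_le_of_lipschitzOnWith_deriv (convex_Ici 0)
    (fun x _ => (hasDerivAt_poissonWeight k x).hasDerivWithinAt)
    (lipschitzOnWith_poissonWeightDeriv k) (Set.mem_Ici.2 (hnn ω)) (Set.mem_Ici.2 hmean)
  exact abs_integral_comp_sub_comp_integral_le_mul_variance h2 hint (ae_of_all _ htaylor)

/-- For a nonnegative random variable `Ψ` with finite second moment and `k ∈ ℕ`,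
`|E[e^{-Ψ} Ψ^k / k!] − e^{-E[Ψ]} (E[Ψ])^k / k!| ≤ 2·Var[Ψ]`. -/
theorem abs_expectation_poissonWeight_sub_le {Ω : Type*} [MeasurableSpace Ω]
    (μ : Measure Ω) [IsProbabilityMeasure μ] (Ψ : Ω → ℝ) (hΨ : Measurable Ψ)
    (hnn : ∀ ω, 0 ≤ Ψ ω) (h2 : MemLp Ψ 2 μ) (k : ℕ) :
    |(∫ ω, Real.exp (-Ψ ω) * Ψ ω ^ k / (Nat.factorial k : ℝ) ∂μ)
        - Real.exp (-(∫ ω, Ψ ω ∂μ)) * (∫ ω, Ψ ω ∂μ) ^ k / (Nat.factorial k : ℝ)|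
      ≤ 2 * variance Ψ μ :=
  abs_expectation_poissonWeight_sub_le_general μ Ψ hnn h2 k
end

section
/- Fix α > 0, γ > 0 and integers 0 ≤ i₁ < i₂. For ρ = γα/log α, the product ∏_{i=i₁+1}^{i₂} (iα)/(iα+ρ) equals exp(−(γ/log α) ∑_{i=i₁+1}^{i₂} 1/i) + O(1/(log α)²) as α → ∞, uniformly in i₁ < i₂ ≤ ⌊2α⌋; more precisely, the absolute difference between the product and exp(−(γ/log α) ∑_{i=i₁+1}^{i₂} 1/i) is bounded by C(γ)/(log α)² for α large, for a constant C(γ) independent of i₁, i₂. -/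
/-!
With `xᵢ = γ / (i log α)` each factor is `(1 + xᵢ)⁻¹`, so the product is `exp (-∑ log (1 + xᵢ))`
while the comparison term is `exp (-∑ xᵢ)`. From `x - x² ≤ log (1 + x) ≤ x` for `x ≥ 0` and the
fact that `exp` is `1`-Lipschitz on `(-∞, 0]`, the difference is at most
`∑ xᵢ² = (γ / log α)² ∑ 1/i² ≤ 2γ² / (log α)²`.
-/

open Finset Real

lemma Real.sub_sq_le_log_one_add {x : ℝ} (hx : 0 ≤ x) : x - x ^ 2 ≤ log (1 + x) := by
  have hx1 : 0 < 1 + x := by linarith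
  calc x - x ^ 2 ≤ 1 - (1 + x)⁻¹ := by
        rw [le_sub_comm, inv_le_iff_one_le_mul₀ hx1]; nlinarith [pow_nonneg hx 3]
    _ ≤ log (1 + x) := one_sub_inv_le_log_of_pos hx1

lemma Real.abs_exp_neg_sub_exp_neg_le {s t : ℝ} (hs : 0 ≤ s) (hst : s ≤ t) :
    |exp (-s) - exp (-t)| ≤ t - s := by
  have hdiff : exp (-s) - exp (-t) = exp (-s) * (1 - exp (-(t - s))) := by
    rw [mul_sub, ← exp_add]; ring_nf
  have hexp_le : exp (-s) ≤ 1 := exp_le_one_iff.mpr (by linarith)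
  have hgap : 0 ≤ 1 - exp (-(t - s)) := sub_nonneg.mpr (exp_le_one_iff.mpr (by linarith))
  rw [hdiff, abs_of_nonneg (mul_nonneg (exp_pos _).le hgap)]
  calc exp (-s) * (1 - exp (-(t - s))) ≤ 1 - exp (-(t - s)) :=
        mul_le_of_le_one_left hgap hexp_le
    _ ≤ t - s := by linarith [one_sub_le_exp_neg (t - s)]

theorem abs_prod_inv_one_add_sub_exp_neg_sum_le {ι : Type*} {s : Finset ι} {x : ι → ℝ}
    (hx : ∀ i ∈ s, 0 ≤ x i) :
    |∏ i ∈ s, (1 + x i)⁻¹ - exp (-∑ i ∈ s, x i)| ≤ ∑ i ∈ s, x i ^ 2 := by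
  have hprod : ∏ i ∈ s, (1 + x i)⁻¹ = exp (-∑ i ∈ s, log (1 + x i)) := by
    rw [exp_neg, exp_sum, prod_inv_distrib]
    exact congrArg _ (prod_congr rfl fun i hi => (exp_log (by linarith [hx i hi])).symm)
  have hlog_nonneg : 0 ≤ ∑ i ∈ s, log (1 + x i) :=
    sum_nonneg fun i hi => log_nonneg (by linarith [hx i hi])
  have hlog_le : ∑ i ∈ s, log (1 + x i) ≤ ∑ i ∈ s, x i :=
    sum_le_sum fun i hi => by linarith [log_le_sub_one_of_pos (by linarith [hx i hi] : 0 < 1 + x i)]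
  have hgap : ∑ i ∈ s, x i - ∑ i ∈ s, log (1 + x i) ≤ ∑ i ∈ s, x i ^ 2 := by
    rw [← sum_sub_distrib]
    exact sum_le_sum fun i hi => by linarith [sub_sq_le_log_one_add (hx i hi)]
  rw [hprod]
  exact (abs_exp_neg_sub_exp_neg_le hlog_nonneg hlog_le).trans hgap

lemma sum_Icc_inv_sq_le_two (a b : ℕ) : ∑ i ∈ Icc (a + 1) b, ((i : ℝ) ^ 2)⁻¹ ≤ 2 := by
  calc ∑ i ∈ Icc (a + 1) b, ((i : ℝ) ^ 2)⁻¹ ≤ ∑ i ∈ Ioo 0 (b + 1), ((i : ℝ) ^ 2)⁻¹ :=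
        sum_le_sum_of_subset_of_nonneg (fun i hi => by simp only [mem_Icc, mem_Ioo] at hi ⊢; omega)
          fun i _ _ => by positivity
    _ ≤ 2 := (sum_Ioo_inv_sq_le 0 (b + 1)).trans_eq (by norm_num)

lemma mul_div_mul_add_mul_eq_inv_one_add_div {x a c : ℝ} (hx : x ≠ 0) (ha : a ≠ 0) :
    x * a / (x * a + c * a) = (1 + c / x)⁻¹ := by
  field_simp

/-- For `ρ = γα/log α`, the product `∏_{i=i₁+1}^{i₂} iα/(iα+ρ)` equals
`exp(−(γ/log α) ∑_{i=i₁+1}^{i₂} 1/i)` up to an error bounded by `C(γ)/(log α)²`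
for all large `α`, uniformly in `0 ≤ i₁ < i₂ ≤ ⌊2α⌋`. -/
theorem yule_mark_product_approx (γ : ℝ) (hγ : 0 < γ) :
    ∃ C > (0 : ℝ), ∃ A : ℝ, ∀ α : ℝ, A ≤ α → ∀ i₁ i₂ : ℕ, i₁ < i₂ → i₂ ≤ ⌊2 * α⌋₊ →
      |(∏ i ∈ Finset.Icc (i₁ + 1) i₂,
            ((i : ℝ) * α) / ((i : ℝ) * α + γ * α / Real.log α))
          - Real.exp (-(γ / Real.log α) * ∑ i ∈ Finset.Icc (i₁ + 1) i₂, (1 : ℝ) / (i : ℝ))|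
        ≤ C / (Real.log α) ^ 2 := by
  refine ⟨2 * γ ^ 2, by positivity, 2, fun α hα i₁ i₂ _ _ => ?_⟩
  have hlog : 0 < log α := log_pos (by linarith)
  have hfactor : ∀ i ∈ Icc (i₁ + 1) i₂,
      (i : ℝ) * α / ((i : ℝ) * α + γ * α / log α) = (1 + γ / log α / i)⁻¹ := fun i hi => by
    have hi : (0 : ℝ) < i := Nat.cast_pos.2 (by have := (mem_Icc.1 hi).1; omega)
    rw [mul_div_right_comm γ]
    exact mul_div_mul_add_mul_eq_inv_one_add_div hi.ne' (by linarith : (0 : ℝ) < α).ne'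
  have hexponent : -(γ / log α) * ∑ i ∈ Icc (i₁ + 1) i₂, (1 : ℝ) / i
      = -∑ i ∈ Icc (i₁ + 1) i₂, γ / log α / i := by
    rw [neg_mul, mul_sum]; simp only [mul_one_div]
  rw [prod_congr rfl hfactor, hexponent]
  calc _ ≤ ∑ i ∈ Icc (i₁ + 1) i₂, (γ / log α / i) ^ 2 :=
        abs_prod_inv_one_add_sub_exp_neg_sum_le fun i _ => by positivity
    _ = (γ / log α) ^ 2 * ∑ i ∈ Icc (i₁ + 1) i₂, ((i : ℝ) ^ 2)⁻¹ := by
        simp only [mul_sum, div_eq_mul_inv, mul_pow, inv_pow]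
    _ ≤ (γ / log α) ^ 2 * 2 := by gcongr; exact sum_Icc_inv_sq_le_two i₁ i₂
    _ = 2 * γ ^ 2 / log α ^ 2 := by ring
end
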